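/- For any binary partition {G, G^c} of the message set with conditional (given Y^τ) posterior probabilities each at least λδ, the probability that a decoder deciding W at time T errs is at least the minimal error probability of the induced binary test of 'W ∈ G' versus 'W ∉ G' decided at time T; in particular, Pr[ Ŵ(Y^T) ≠ W | Y^τ ] ≥ (λδ/4) exp( −C_1 E[T − τ | Y^τ] ). -/

import Mathlib

/-!
Given `Y^τ = s`, the cell `stopCell τ s` is a cylinder, and the hypotheses `W ∈ G` and `W ∉ G`
induce on the tree of output prefixes below it two unnormalised distributions `P` and `Q`, of
masses `a` and `b`. The decoder errs whenever the induced binary test does, and on the leaves of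
the tree stopped at `T` and truncated at depth `d` the binary test errs with mass at least
`∑ min P Q`. Each output step is a mixture of channel rows, so the divergence between `P` and `Q`
grows by at most `C₁` per step; with the Bhattacharyya bound and Cauchy–Schwarz this gives
`∑ min P Q ≥ a b / (a + b) · exp (-C₁ E[T - τ])`. Truncation costs the mass of `{T > d}`, which
vanishes as `d → ∞`, and the posterior bounds give `a b / (a + b)² ≥ λδ / 4`.
-/

open MeasureTheory
open scoped BigOperators

/-- The cylinder set of output sequences agreeing with `v` on the first `n` coordinates. -/
def cylinder {Y : Type*} (n : ℕ) (v : ℕ → Y) : Set (ℕ → Y) :=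
  {ω | ∀ i < n, ω i = v i}

/-- The set of output sequences stopped by `S` at the leaf `s` of the observation tree. -/
def stopCell {Y : Type*} (S : (ℕ → Y) → ℕ) (s : Σ n, Fin n → Y) : Set (ℕ → Y) :=
  {ω | S ω = s.1 ∧ ∀ i : Fin s.1, ω i = s.2 i}

open Real

theorem sum_mul_log_div_le {ι : Type*} (s : Finset ι) {c e : ι → ℝ}
    (hc : ∀ i ∈ s, 0 < c i) (he : ∀ i ∈ s, 0 < e i) :
    (∑ i ∈ s, c i) * log ((∑ i ∈ s, c i) / ∑ i ∈ s, e i) ≤ ∑ i ∈ s, c i * log (c i / e i) := by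
  rcases s.eq_empty_or_nonempty with rfl | hs
  · simp
  set E := ∑ i ∈ s, e i
  have hE : 0 < E := Finset.sum_pos he hs
  have hJensen := Real.convexOn_mul_log.map_sum_le (t := s) (w := fun i => e i / E)
    (p := fun i => c i / e i) (fun i hi => (div_pos (he i hi) hE).le)
    (by rw [← Finset.sum_div, div_self hE.ne'])
    (fun i hi => (div_pos (hc i hi) (he i hi)).le)
  have hmean : ∑ i ∈ s, (e i / E) • (c i / e i) = (∑ i ∈ s, c i) / E := by
    rw [Finset.sum_div]
    refine Finset.sum_congr rfl fun i hi => ?_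
    rw [smul_eq_mul]
    field_simp [(he i hi).ne']
  have hvals : ∑ i ∈ s, (e i / E) • (c i / e i * log (c i / e i)) =
      (∑ i ∈ s, c i * log (c i / e i)) / E := by
    rw [Finset.sum_div]
    refine Finset.sum_congr rfl fun i hi => ?_
    rw [smul_eq_mul]
    field_simp [(he i hi).ne']
  rw [hmean, hvals, div_mul_eq_mul_div, div_le_div_iff_of_pos_right hE] at hJensen
  exact hJensen

theorem mul_mul_log_div_le_sum_product {ι κ : Type*} {s : Finset ι} {t : Finset κ}
    {α a : ι → ℝ} {β b : κ → ℝ} (hα : ∀ i ∈ s, 0 < α i) (hβ : ∀ k ∈ t, 0 < β k)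
    (ha : ∀ i ∈ s, 0 < a i) (hb : ∀ k ∈ t, 0 < b k) :
    (∑ k ∈ t, β k) * (∑ i ∈ s, α i * a i) *
        log ((∑ k ∈ t, β k) * (∑ i ∈ s, α i * a i) / ((∑ i ∈ s, α i) * ∑ k ∈ t, β k * b k)) ≤
      ∑ ik ∈ s ×ˢ t, α ik.1 * β ik.2 * (a ik.1 * log (a ik.1 / b ik.2)) := by
  have h := sum_mul_log_div_le (s ×ˢ t)
    (c := fun ik => α ik.1 * a ik.1 * β ik.2) (e := fun ik => α ik.1 * (β ik.2 * b ik.2))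
    (fun ik hik => by
      obtain ⟨hi, hk⟩ := Finset.mem_product.mp hik
      have := hα _ hi; have := hβ _ hk; have := ha _ hi; positivity)
    (fun ik hik => by
      obtain ⟨hi, hk⟩ := Finset.mem_product.mp hik
      have := hα _ hi; have := hβ _ hk; have := hb _ hk; positivity)
  have hc : ∑ ik ∈ s ×ˢ t, α ik.1 * a ik.1 * β ik.2 = (∑ i ∈ s, α i * a i) * ∑ k ∈ t, β k := by
    rw [Finset.sum_product, Finset.sum_mul_sum]
  have he : ∑ ik ∈ s ×ˢ t, α ik.1 * (β ik.2 * b ik.2) = (∑ i ∈ s, α i) * ∑ k ∈ t, β k * b k := by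
    rw [Finset.sum_product, Finset.sum_mul_sum]
  rw [hc, he, mul_comm (∑ i ∈ s, _)] at h
  refine h.trans (le_of_eq (Finset.sum_congr rfl fun ik hik => ?_))
  obtain ⟨hi, hk⟩ := Finset.mem_product.mp hik
  have := hα _ hi; have := hβ _ hk
  rw [show α ik.1 * a ik.1 * β ik.2 / (α ik.1 * (β ik.2 * b ik.2)) = a ik.1 / b ik.2 by
    field_simp]
  ring

theorem sum_mixture_mul_log_div_le {X Y ι κ : Type*} [Fintype Y] (p : X → Y → ℝ)
    (hpos : ∀ x y, 0 < p x y) (hsum : ∀ x, ∑ y, p x y = 1) {C : ℝ}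
    (hC : ∀ x x', ∑ y, p x y * log (p x y / p x' y) ≤ C)
    {s : Finset ι} {t : Finset κ} (hs : s.Nonempty) (ht : t.Nonempty)
    {α : ι → ℝ} {β : κ → ℝ} (hα : ∀ i ∈ s, 0 < α i) (hβ : ∀ k ∈ t, 0 < β k)
    (x : ι → X) (x' : κ → X) :
    ∑ y, (∑ i ∈ s, α i * p (x i) y) *
        log ((∑ i ∈ s, α i * p (x i) y) / ∑ k ∈ t, β k * p (x' k) y) ≤
      (∑ i ∈ s, α i) * log ((∑ i ∈ s, α i) / ∑ k ∈ t, β k) + C * ∑ i ∈ s, α i := by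
  set A := ∑ i ∈ s, α i
  set B := ∑ k ∈ t, β k
  have hA : 0 < A := Finset.sum_pos hα hs
  have hB : 0 < B := Finset.sum_pos hβ ht
  set P := fun y => ∑ i ∈ s, α i * p (x i) y
  set Q := fun y => ∑ k ∈ t, β k * p (x' k) y
  have hPA : ∑ y, P y = A := by
    simp only [P]
    rw [Finset.sum_comm]
    exact Finset.sum_congr rfl fun i _ => by rw [← Finset.mul_sum, hsum, mul_one]
  have hsummed : B * ∑ y, P y * log (P y / Q y) + A * B * log (B / A) ≤ A * B * C := by
    calc B * ∑ y, P y * log (P y / Q y) + A * B * log (B / A)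
        = ∑ y, (B * (P y * log (P y / Q y)) + P y * (B * log (B / A))) := by
          rw [Finset.sum_add_distrib, ← Finset.mul_sum, ← Finset.sum_mul, hPA]
          ring
      _ = ∑ y, B * P y * log (B * P y / (A * Q y)) := by
          refine Finset.sum_congr rfl fun y _ => ?_
          have : 0 < P y := Finset.sum_pos (fun i hi => mul_pos (hα i hi) (hpos _ _)) hs
          have : 0 < Q y := Finset.sum_pos (fun k hk => mul_pos (hβ k hk) (hpos _ _)) ht
          rw [show B * P y / (A * Q y) = P y / Q y * (B / A) by field_simp,
            log_mul (by positivity) (by positivity)]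
          ring
      _ ≤ ∑ y, ∑ ik ∈ s ×ˢ t,
            α ik.1 * β ik.2 * (p (x ik.1) y * log (p (x ik.1) y / p (x' ik.2) y)) :=
          Finset.sum_le_sum fun y _ => mul_mul_log_div_le_sum_product hα hβ
            (fun i _ => hpos (x i) y) (fun k _ => hpos (x' k) y)
      _ ≤ ∑ ik ∈ s ×ˢ t, α ik.1 * β ik.2 * C := by
          rw [Finset.sum_comm]
          refine Finset.sum_le_sum fun ik hik => ?_
          obtain ⟨hi, hk⟩ := Finset.mem_product.mp hik
          rw [← Finset.mul_sum]
          exact mul_le_mul_of_nonneg_left (hC _ _) (mul_pos (hα _ hi) (hβ _ hk)).le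
      _ = A * B * C := by
          rw [← Finset.sum_mul, Finset.sum_product, Finset.sum_mul_sum]
  rw [← neg_neg (log (B / A)), ← log_inv, inv_div] at hsummed
  have : B * (∑ y, P y * log (P y / Q y)) ≤ B * (A * log (A / B) + C * A) := by nlinarith
  exact le_of_mul_le_mul_left this hB

theorem div_four_le_mul_div_add_div_add {a b c : ℝ} (hc : 0 < c) (hab : 0 < a + b)
    (hca : c ≤ a / (a + b)) (hcb : a / (a + b) ≤ 1 - c) :
    c / 4 ≤ a * b / (a + b) / (a + b) := by
  rw [le_div_iff₀ hab] at hca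
  rw [div_le_iff₀ hab] at hcb
  have hhalf : c * 2 ≤ 1 := le_of_mul_le_mul_right (by linarith) hab
  rw [div_div, le_div_iff₀ (by positivity)]
  nlinarith [mul_nonneg (sub_nonneg.2 hca) (by linarith : 0 ≤ b - c * (a + b)),
    mul_nonneg (mul_nonneg hc.le (sq_nonneg (a + b))) (sub_nonneg.2 hhalf)]

theorem le_ciSup_ciSup_of_finite {ι κ : Type*} [Finite ι] [Finite κ] (F : ι → κ → ℝ) (i : ι)
    (k : κ) : F i k ≤ ⨆ i, ⨆ k, F i k :=
  le_ciSup_of_le (Finite.bddAbove_range _) i (le_ciSup (Finite.bddAbove_range _) k)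

theorem min_div_le_add_div_add {a b x y : ℝ} (ha : 0 < a) (hb : 0 < b) :
    min (x / a) (y / b) ≤ (x + y) / (a + b) := by
  rcases le_total (x / a) (y / b) with h | h
  · rw [min_eq_left h, div_le_div_iff₀ ha (by positivity)]
    rw [div_le_div_iff₀ ha hb] at h
    nlinarith
  · rw [min_eq_right h, div_le_div_iff₀ hb (by positivity)]
    rw [div_le_div_iff₀ hb ha] at h
    nlinarith

theorem sum_measure_inter_mem_ne_le {Ω W : Type*} [MeasurableSpace Ω] [Fintype W]
    (μ : W → Measure Ω) [∀ w, IsFiniteMeasure (μ w)] (dec : Ω → W) (H : Finset W) (A : Set Ω) :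
    ∑ w, (μ w ({ω | (dec ω ∈ H) ≠ (w ∈ H)} ∩ A)).toReal ≤
      ∑ w, (μ w ({ω | dec ω ≠ w} ∩ A)).toReal :=
  Finset.sum_le_sum fun w _ => ENNReal.toReal_mono (measure_ne_top _ _)
    (measure_mono (Set.inter_subset_inter_left _ fun ω h he => h (by rw [he])))

theorem setIntegral_sub_natCast_of_eqOn {Ω : Type*} [MeasurableSpace Ω] {ν : Measure Ω}
    [IsFiniteMeasure ν] {A : Set Ω} (hA : MeasurableSet A) {F : Ω → ℝ} (hF : Integrable F ν)
    {τ : Ω → ℕ} {m : ℕ} (hτ : ∀ ω ∈ A, τ ω = m) :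
    ∫ ω in A, (F ω - τ ω) ∂ν = ∫ ω in A, F ω ∂ν - m * (ν A).toReal := by
  rw [setIntegral_congr_fun hA fun ω hω => by rw [hτ ω hω],
    integral_sub hF.integrableOn (integrableOn_const (measure_ne_top _ _)), setIntegral_const,
    measureReal_def, smul_eq_mul, mul_comm]

theorem tendsto_measure_setOf_lt_atTop {Ω : Type*} [MeasurableSpace Ω] (ν : Measure Ω)
    [IsFiniteMeasure ν] {S : Ω → ℕ} (hS : ∀ n, MeasurableSet {ω | n < S ω}) :
    Filter.Tendsto (fun n => ν {ω | n < S ω}) Filter.atTop (nhds 0) := by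
  have h := tendsto_measure_iInter_atTop (μ := ν) (fun n => (hS n).nullMeasurableSet)
    (fun n n' hn ω hω => hn.trans_lt hω) ⟨0, measure_ne_top _ _⟩
  rwa [Set.iInter_eq_empty_iff.2 fun ω => ⟨S ω, (lt_irrefl (S ω) : ¬S ω < S ω)⟩, measure_empty] at h

section LeafSum

variable {Y : Type*} [Fintype Y] {halt : (j : ℕ) → (Fin j → Y) → Prop}
  [∀ j u, Decidable (halt j u)]

variable (halt) in
/-- The sum of `g` over the leaves of the tree of output prefixes below `u` that is cut at the
nodes where `halt` holds and at `d` levels below `u`. -/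
def leafSum (g : (j : ℕ) → (Fin j → Y) → ℝ) : ℕ → (j : ℕ) → (Fin j → Y) → ℝ
  | 0, j, u => g j u
  | d + 1, j, u => if halt j u then g j u else ∑ y, leafSum g d (j + 1) (Fin.snoc u y)

theorem leafSum_le_leafSum {g g' : (j : ℕ) → (Fin j → Y) → ℝ}
    (I : (j : ℕ) → (Fin j → Y) → Prop)
    (hI : ∀ j u y, I j u → ¬halt j u → I (j + 1) (Fin.snoc u y)) :
    ∀ d j u, I j u → (∀ j' u', I j' u' → (halt j' u' ∨ j' = j + d) → g j' u' ≤ g' j' u') →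
      leafSum halt g d j u ≤ leafSum halt g' d j u
  | 0, j, u, hu, hle => hle j u hu (Or.inr rfl)
  | d + 1, j, u, hu, hle => by
    simp only [leafSum]
    split_ifs with hs
    · exact hle j u hu (Or.inl hs)
    · refine Finset.sum_le_sum fun y _ => leafSum_le_leafSum I hI d _ _ (hI j u y hu hs) ?_
      exact fun j' u' hu' hleaf => hle j' u' hu' (hleaf.imp_right fun h => by omega)

theorem leafSum_mono {g g' : (j : ℕ) → (Fin j → Y) → ℝ} (h : ∀ j u, g j u ≤ g' j u)
    (d j : ℕ) (u : Fin j → Y) : leafSum halt g d j u ≤ leafSum halt g' d j u :=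
  leafSum_le_leafSum (fun _ _ => True) (fun _ _ _ _ _ => trivial) d j u trivial
    fun j u _ _ => h j u

theorem leafSum_add (g g' : (j : ℕ) → (Fin j → Y) → ℝ) :
    ∀ d j u, leafSum halt (fun j u => g j u + g' j u) d j u =
      leafSum halt g d j u + leafSum halt g' d j u
  | 0, _, _ => rfl
  | d + 1, j, u => by
    simp only [leafSum, leafSum_add g g' d, Finset.sum_add_distrib]
    split_ifs <;> rfl

theorem leafSum_const_mul (c : ℝ) (g : (j : ℕ) → (Fin j → Y) → ℝ) :
    ∀ d j u, leafSum halt (fun j u => c * g j u) d j u = c * leafSum halt g d j u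
  | 0, _, _ => rfl
  | d + 1, j, u => by
    simp only [leafSum, leafSum_const_mul c g d, ← Finset.mul_sum]
    split_ifs <;> rfl

theorem leafSum_eq_self {g : (j : ℕ) → (Fin j → Y) → ℝ}
    (h : ∀ j u, ∑ y, g (j + 1) (Fin.snoc u y) = g j u) :
    ∀ d j u, leafSum halt g d j u = g j u
  | 0, _, _ => rfl
  | d + 1, j, u => by
    simp only [leafSum, leafSum_eq_self h d, h]
    split_ifs <;> rfl

theorem leafSum_nonneg {g : (j : ℕ) → (Fin j → Y) → ℝ} (h : ∀ j u, 0 ≤ g j u)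
    (d j : ℕ) (u : Fin j → Y) : 0 ≤ leafSum halt g d j u := by
  simpa [leafSum_eq_self (g := fun _ _ => 0)] using leafSum_mono (halt := halt) h d j u

theorem leafSum_pos [Nonempty Y] {g : (j : ℕ) → (Fin j → Y) → ℝ} (h : ∀ j u, 0 < g j u) :
    ∀ d j u, 0 < leafSum halt g d j u
  | 0, j, u => h j u
  | d + 1, j, u => by
    simp only [leafSum]
    split_ifs
    · exact h j u
    · exact Finset.sum_pos (fun y _ => leafSum_pos h d _ _) Finset.univ_nonempty

theorem leafSum_le_sqrt_mul_sqrt {g g₁ g₂ : (j : ℕ) → (Fin j → Y) → ℝ}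
    (hg₁ : ∀ j u, 0 ≤ g₁ j u) (hg₂ : ∀ j u, 0 ≤ g₂ j u)
    (h : ∀ j u, g j u ≤ √(g₁ j u) * √(g₂ j u)) :
    ∀ d j u, leafSum halt g d j u ≤ √(leafSum halt g₁ d j u) * √(leafSum halt g₂ d j u)
  | 0, j, u => h j u
  | d + 1, j, u => by
    simp only [leafSum]
    split_ifs
    · exact h j u
    · exact (Finset.sum_le_sum fun y _ => leafSum_le_sqrt_mul_sqrt hg₁ hg₂ h d _ _).trans
        (Real.sum_sqrt_mul_sqrt_le _ (fun _ => leafSum_nonneg hg₁ _ _ _)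
          fun _ => leafSum_nonneg hg₂ _ _ _)

theorem leafSum_mul_log_div_le {P Q : (j : ℕ) → (Fin j → Y) → ℝ} {C : ℝ}
    (hP : ∀ j u, ∑ y, P (j + 1) (Fin.snoc u y) = P j u)
    (hstep : ∀ j u, ∑ y, P (j + 1) (Fin.snoc u y) *
        log (P (j + 1) (Fin.snoc u y) / Q (j + 1) (Fin.snoc u y)) ≤
      P j u * log (P j u / Q j u) + C * P j u) :
    ∀ d j u, leafSum halt (fun j u => P j u * log (P j u / Q j u)) d j u ≤
      P j u * log (P j u / Q j u) + C * (leafSum halt (fun j u => j * P j u) d j u - j * P j u)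
  | 0, j, u => by simp [leafSum]
  | d + 1, j, u => by
    simp only [leafSum]
    split_ifs
    · simp
    · have h := Finset.sum_le_sum fun y (_ : y ∈ Finset.univ) =>
        leafSum_mul_log_div_le hP hstep d (j + 1) (Fin.snoc u y)
      rw [Finset.sum_add_distrib, ← Finset.mul_sum, Finset.sum_sub_distrib, ← Finset.mul_sum,
        hP] at h
      push_cast at h
      linarith [hstep j u]

-- `log x ≤ x - 1` at `x = √(q / p) / B`, written as a linear combination of node values so that
-- `leafSum` can be pushed through it
theorem neg_mul_log_div_le {p q B : ℝ} (hp : 0 < p) (hq : 0 < q) (hB : 0 < B) :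
    -(1 / 2) * (p * log (p / q)) ≤ log B * p + (B⁻¹ * √(p * q) + -1 * p) := by
  have hx : 0 < √(p * q) / (p * B) := by positivity
  have hlog : log (√(p * q) / (p * B)) = (log q - log p) / 2 - log B := by
    rw [log_div (by positivity) (by positivity), log_sqrt (by positivity), log_mul hp.ne' hq.ne',
      log_mul hp.ne' hB.ne']
    ring
  have h := mul_le_mul_of_nonneg_left (log_le_sub_one_of_pos hx) hp.le
  rw [hlog, show p * (√(p * q) / (p * B) - 1) = B⁻¹ * √(p * q) - p by field_simp] at h
  rw [log_div hp.ne' hq.ne']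
  linarith

/-- Jensen's inequality for `log`, bounding the Bhattacharyya coefficient below by the
divergence. -/
theorem mul_exp_le_leafSum_sqrt [Nonempty Y] {P Q : (j : ℕ) → (Fin j → Y) → ℝ}
    (hP0 : ∀ j u, 0 < P j u) (hQ0 : ∀ j u, 0 < Q j u)
    (hP : ∀ j u, ∑ y, P (j + 1) (Fin.snoc u y) = P j u) (d j : ℕ) (u : Fin j → Y) :
    P j u * exp (-(leafSum halt (fun j u => P j u * log (P j u / Q j u)) d j u / (2 * P j u))) ≤
      leafSum halt (fun j u => √(P j u * Q j u)) d j u := by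
  set S := leafSum halt (fun j u => √(P j u * Q j u)) d j u
  set D := leafSum halt (fun j u => P j u * log (P j u / Q j u)) d j u
  have ha := hP0 j u
  have hS : 0 < S := leafSum_pos (fun j u => sqrt_pos.2 (mul_pos (hP0 j u) (hQ0 j u))) d j u
  have hB : 0 < S / P j u := div_pos hS ha
  -- with `B = S / a` the `√(P Q)` terms sum to `a` and cancel the `P` terms
  have h := leafSum_mono (halt := halt)
    (fun j u => neg_mul_log_div_le (hP0 j u) (hQ0 j u) hB) d j u
  rw [leafSum_const_mul, leafSum_add, leafSum_add, leafSum_const_mul, leafSum_const_mul,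
    leafSum_const_mul, leafSum_eq_self hP, inv_div, div_mul_cancel₀ _ hS.ne'] at h
  have hlog : -(D / (2 * P j u)) ≤ log (S / P j u) := by
    rw [neg_le, le_div_iff₀ (by positivity)]
    linarith
  calc P j u * exp (-(D / (2 * P j u))) ≤ P j u * (S / P j u) := by
        gcongr
        exact (exp_le_exp.2 hlog).trans (exp_log hB).le
    _ = S := mul_div_cancel₀ _ ha.ne'

theorem mul_mul_exp_le_sq_leafSum_sqrt [Nonempty Y] {P Q : (j : ℕ) → (Fin j → Y) → ℝ} {C : ℝ}
    (hP0 : ∀ j u, 0 < P j u) (hQ0 : ∀ j u, 0 < Q j u)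
    (hP : ∀ j u, ∑ y, P (j + 1) (Fin.snoc u y) = P j u)
    (hstep : ∀ j u, ∑ y, P (j + 1) (Fin.snoc u y) *
        log (P (j + 1) (Fin.snoc u y) / Q (j + 1) (Fin.snoc u y)) ≤
      P j u * log (P j u / Q j u) + C * P j u) (d j : ℕ) (u : Fin j → Y) :
    P j u * Q j u * exp (-(C * (leafSum halt (fun j u => j * P j u) d j u - j * P j u) / P j u)) ≤
      leafSum halt (fun j u => √(P j u * Q j u)) d j u ^ 2 := by
  set a := P j u
  set b := Q j u
  set X := leafSum halt (fun j u => j * P j u) d j u - j * a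
  set D := leafSum halt (fun j u => P j u * log (P j u / Q j u)) d j u
  have ha : 0 < a := hP0 j u
  have hb : 0 < b := hQ0 j u
  have hchain : D ≤ a * log (a / b) + C * X := leafSum_mul_log_div_le hP hstep d j u
  have hD : D / a ≤ log (a / b) + C * X / a := by
    rw [div_le_iff₀ ha, add_mul, div_mul_cancel₀ _ ha.ne']
    linarith
  calc a * b * exp (-(C * X / a)) = a ^ 2 * exp (-log (a / b) - C * X / a) := by
        rw [show -log (a / b) - C * X / a = -log (a / b) + -(C * X / a) by ring, exp_add,
          exp_neg (log (a / b)), exp_log (div_pos ha hb)]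
        field_simp
    _ ≤ a ^ 2 * exp (-(D / a)) := by gcongr; linarith
    _ = (a * exp (-(D / (2 * a)))) ^ 2 := by
        rw [mul_pow, sq (exp _), ← exp_add]
        ring_nf
    _ ≤ _ := pow_le_pow_left₀ (by positivity) (mul_exp_le_leafSum_sqrt hP0 hQ0 hP d j u) 2

theorem sq_leafSum_sqrt_le_leafSum_min_mul {P Q : (j : ℕ) → (Fin j → Y) → ℝ}
    (hP0 : ∀ j u, 0 ≤ P j u) (hQ0 : ∀ j u, 0 ≤ Q j u)
    (hP : ∀ j u, ∑ y, P (j + 1) (Fin.snoc u y) = P j u)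
    (hQ : ∀ j u, ∑ y, Q (j + 1) (Fin.snoc u y) = Q j u) (d j : ℕ) (u : Fin j → Y) :
    leafSum halt (fun j u => √(P j u * Q j u)) d j u ^ 2 ≤
      leafSum halt (fun j u => min (P j u) (Q j u)) d j u * (P j u + Q j u) := by
  have hmin : ∀ j u, 0 ≤ min (P j u) (Q j u) := fun j u => le_min (hP0 j u) (hQ0 j u)
  have hmax : ∀ j u, 0 ≤ max (P j u) (Q j u) := fun j u => (hP0 j u).trans (le_max_left _ _)
  have hCS := leafSum_le_sqrt_mul_sqrt (halt := halt) hmin hmax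
    (fun j u => by rw [← sqrt_mul (hmin j u), min_mul_max]) d j u
  have hsum : leafSum halt (fun j u => max (P j u) (Q j u)) d j u ≤ P j u + Q j u :=
    (leafSum_mono (fun j u => max_le_add_of_nonneg (hP0 j u) (hQ0 j u)) d j u).trans
      (leafSum_eq_self (fun j u => by rw [Finset.sum_add_distrib, hP, hQ]) d j u).le
  calc _ ≤ (√(leafSum halt (fun j u => min (P j u) (Q j u)) d j u) *
        √(leafSum halt (fun j u => max (P j u) (Q j u)) d j u)) ^ 2 :=
        pow_le_pow_left₀ (leafSum_nonneg (fun _ _ => sqrt_nonneg _) d j u) hCS 2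
    _ ≤ _ := by
        rw [mul_pow, sq_sqrt (leafSum_nonneg hmin d j u), sq_sqrt (leafSum_nonneg hmax d j u)]
        exact mul_le_mul_of_nonneg_left hsum (leafSum_nonneg hmin d j u)

/-- A stopped form of the Bretagnolle–Huber inequality between two unnormalised distributions
whose divergence grows by at most `C` per step. -/
theorem mul_div_add_mul_exp_le_leafSum_min [Nonempty Y] {P Q : (j : ℕ) → (Fin j → Y) → ℝ}
    {C : ℝ} (hP0 : ∀ j u, 0 < P j u) (hQ0 : ∀ j u, 0 < Q j u)
    (hP : ∀ j u, ∑ y, P (j + 1) (Fin.snoc u y) = P j u)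
    (hQ : ∀ j u, ∑ y, Q (j + 1) (Fin.snoc u y) = Q j u)
    (hPQ : ∀ j u, ∑ y, P (j + 1) (Fin.snoc u y) *
        log (P (j + 1) (Fin.snoc u y) / Q (j + 1) (Fin.snoc u y)) ≤
      P j u * log (P j u / Q j u) + C * P j u)
    (hQP : ∀ j u, ∑ y, Q (j + 1) (Fin.snoc u y) *
        log (Q (j + 1) (Fin.snoc u y) / P (j + 1) (Fin.snoc u y)) ≤
      Q j u * log (Q j u / P j u) + C * Q j u) (d j : ℕ) (u : Fin j → Y) :
    P j u * Q j u / (P j u + Q j u) *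
        exp (-(C * ((leafSum halt (fun j u => j * (P j u + Q j u)) d j u -
          j * (P j u + Q j u)) / (P j u + Q j u)))) ≤
      leafSum halt (fun j u => min (P j u) (Q j u)) d j u := by
  set XP := leafSum halt (fun j u => j * P j u) d j u - j * P j u
  set XQ := leafSum halt (fun j u => j * Q j u) d j u - j * Q j u
  have ha := hP0 j u
  have hb := hQ0 j u
  have hSQ := mul_mul_exp_le_sq_leafSum_sqrt hQ0 hP0 hQ hQP d j u (halt := halt)
  simp only [mul_comm (Q _ _) (P _ _)] at hSQ
  have hX : leafSum halt (fun j u => j * (P j u + Q j u)) d j u - j * (P j u + Q j u) =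
      XP + XQ := by
    simp only [mul_add, leafSum_add]
    ring
  rw [hX, div_mul_eq_mul_div, div_le_iff₀ (by positivity), ← mul_div_assoc, mul_add]
  calc _ ≤ P j u * Q j u * exp (-min (C * XP / P j u) (C * XQ / Q j u)) := by
        gcongr
        exact min_div_le_add_div_add ha hb
    _ ≤ leafSum halt (fun j u => √(P j u * Q j u)) d j u ^ 2 := by
        rcases min_choice (C * XP / P j u) (C * XQ / Q j u) with h | h <;> rw [h]
        exacts [mul_mul_exp_le_sq_leafSum_sqrt hP0 hQ0 hP hPQ d j u, hSQ]
    _ ≤ _ := sq_leafSum_sqrt_le_leafSum_min_mul (fun j u => (hP0 j u).le)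
        (fun j u => (hQ0 j u).le) hP hQ d j u

end LeafSum

section Cylinder

variable {Y : Type*}

-- a sequence with prefix `u`, at which stopping rules are evaluated on the node `u`
def extendSeq (y₀ : Y) {j : ℕ} (u : Fin j → Y) : ℕ → Y :=
  fun i => if h : i < j then u ⟨i, h⟩ else y₀

@[simp]
theorem extendSeq_apply_fin (y₀ : Y) {j : ℕ} (u : Fin j → Y) (i : Fin j) :
    extendSeq y₀ u i = u i := by
  simp [extendSeq]

theorem extendSeq_snoc (y₀ : Y) {j : ℕ} (u : Fin j → Y) (y : Y) :
    extendSeq y₀ (Fin.snoc u y : Fin (j + 1) → Y) = Function.update (extendSeq y₀ u) j y := by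
  funext i
  rcases lt_trichotomy i j with h | rfl | h
  · rw [Function.update_of_ne h.ne, extendSeq, extendSeq, dif_pos (h.trans j.lt_succ_self),
      dif_pos h]
    exact Fin.snoc_castSucc (α := fun _ => Y) (i := ⟨i, h⟩) ..
  · rw [Function.update_self, extendSeq, dif_pos i.lt_succ_self]
    exact Fin.snoc_last (α := fun _ => Y) ..
  · rw [Function.update_of_ne h.ne', extendSeq, extendSeq, dif_neg (by omega), dif_neg (by omega)]

theorem mem_cylinder_extendSeq {y₀ : Y} {j : ℕ} {u : Fin j → Y} {ω : ℕ → Y} :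
    ω ∈ cylinder j (extendSeq y₀ u) ↔ ∀ i : Fin j, ω i = u i :=
  ⟨fun h i => by simpa using h i i.2, fun h i hi => (h ⟨i, hi⟩).trans (by simp [extendSeq, hi])⟩

theorem cylinder_update (n : ℕ) (v : ℕ → Y) (y : Y) :
    cylinder n (Function.update v n y) = cylinder n v := by
  ext ω
  exact forall₂_congr fun i hi => by rw [Function.update_of_ne hi.ne]

theorem cylinder_extendSeq_eq_iUnion (y₀ : Y) {j : ℕ} (u : Fin j → Y) :
    cylinder j (extendSeq y₀ u) = ⋃ y, cylinder (j + 1) (extendSeq y₀ (Fin.snoc u y)) := by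
  ext ω
  simp only [Set.mem_iUnion, mem_cylinder_extendSeq]
  constructor
  · intro h
    refine ⟨ω j, Fin.lastCases ?_ fun i => ?_⟩
    · rw [Fin.snoc_last]; rfl
    · rw [Fin.snoc_castSucc]; exact h i
  · rintro ⟨y, h⟩ i
    simpa using h i.castSucc

theorem pairwise_disjoint_cylinder_extendSeq_snoc (y₀ : Y) {j : ℕ} (u : Fin j → Y) :
    Pairwise (Function.onFun Disjoint fun y => cylinder (j + 1) (extendSeq y₀ (Fin.snoc u y))) :=
  fun y y' hne => Set.disjoint_left.2 fun ω h h' => hne <| by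
    simpa using ((mem_cylinder_extendSeq.1 h (Fin.last j)).symm.trans
      (mem_cylinder_extendSeq.1 h' (Fin.last j)))

variable [MeasurableSpace Y] [MeasurableSingletonClass Y]

theorem measurableSet_cylinder (n : ℕ) (v : ℕ → Y) : MeasurableSet (cylinder n v) := by
  have h : cylinder n v = ⋂ i ∈ Set.Iio n, (fun ω : ℕ → Y => ω i) ⁻¹' {v i} := by
    ext ω; simp [_root_.cylinder]
  rw [h]
  exact .biInter (Set.to_countable _) fun i _ => measurable_pi_apply i (measurableSet_singleton _)

variable [Fintype Y]

theorem sum_measure_inter_cylinder_snoc (ν : Measure (ℕ → Y)) [IsFiniteMeasure ν]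
    {S : Set (ℕ → Y)} (hS : MeasurableSet S) (y₀ : Y) {j : ℕ} (u : Fin j → Y) :
    ∑ y, (ν (S ∩ cylinder (j + 1) (extendSeq y₀ (Fin.snoc u y)))).toReal =
      (ν (S ∩ cylinder j (extendSeq y₀ u))).toReal := by
  rw [cylinder_extendSeq_eq_iUnion y₀ u, Set.inter_iUnion, measure_iUnion
      (fun y y' hne => ((pairwise_disjoint_cylinder_extendSeq_snoc y₀ u) hne).mono
        Set.inter_subset_right Set.inter_subset_right)
      (fun y => hS.inter (measurableSet_cylinder _ _)), tsum_fintype,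
    ENNReal.toReal_sum fun y _ => measure_ne_top _ _]

theorem sum_setIntegral_cylinder_snoc (ν : Measure (ℕ → Y)) {F : (ℕ → Y) → ℝ}
    (hF : Integrable F ν) (y₀ : Y) {j : ℕ} (u : Fin j → Y) :
    ∑ y, ∫ ω in cylinder (j + 1) (extendSeq y₀ (Fin.snoc u y)), F ω ∂ν =
      ∫ ω in cylinder j (extendSeq y₀ u), F ω ∂ν := by
  rw [cylinder_extendSeq_eq_iUnion y₀ u, integral_iUnion (fun y => measurableSet_cylinder _ _)
    (pairwise_disjoint_cylinder_extendSeq_snoc y₀ u) hF.integrableOn, tsum_fintype]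

end Cylinder

section StoppingRule

variable {Y : Type*}

theorem measurableSet_of_forall_agree [MeasurableSpace Y] [MeasurableSingletonClass Y]
    [Countable Y] (T : (ℕ → Y) → ℕ) {S : Set (ℕ → Y)}
    (hS : ∀ ω ω', (∀ i < T ω, ω i = ω' i) → ω ∈ S → ω' ∈ S) : MeasurableSet S := by
  have hsplit : S = ⋃ n, (fun ω (i : Fin n) => ω i) ⁻¹'
      ((fun ω (i : Fin n) => ω i) '' (S ∩ {ω | T ω = n})) := by
    ext ω
    simp only [Set.mem_iUnion, Set.mem_preimage, Set.mem_image]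
    refine ⟨fun h => ⟨T ω, ω, ⟨h, rfl⟩, rfl⟩, fun ⟨n, ω', ⟨h', hn⟩, heq⟩ => ?_⟩
    exact hS ω' ω (hn ▸ fun i hi => congrFun heq ⟨i, hi⟩) h'
  rw [hsplit]
  exact .iUnion fun n =>
    measurableSet_preimage (measurable_pi_lambda _ fun i => measurable_pi_apply _) .of_discrete

def IsStoppingRule (T : (ℕ → Y) → ℕ) : Prop :=
  ∀ (n : ℕ) (ω ω' : ℕ → Y), (∀ i < n, ω i = ω' i) → (T ω = n ↔ T ω' = n)

variable {T : (ℕ → Y) → ℕ} {j : ℕ} {v ω : ℕ → Y}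

theorem IsStoppingRule.eq_of_mem_cylinder (hT : IsStoppingRule T) (hv : T v ≤ j)
    (hω : ω ∈ cylinder j v) : T ω = T v :=
  (hT (T v) v ω fun i hi => (hω i (hi.trans_le hv)).symm).1 rfl

theorem IsStoppingRule.le_of_mem_cylinder (hT : IsStoppingRule T) (hv : j ≤ T v)
    (hω : ω ∈ cylinder j v) : j ≤ T ω := by
  by_contra! h
  have := hT.eq_of_mem_cylinder h.le fun i hi => (hω i hi).symm
  omega

theorem IsStoppingRule.lt_of_mem_cylinder (hT : IsStoppingRule T) (hv : j < T v)
    (hω : ω ∈ cylinder j v) : j < T ω := by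
  by_contra! h
  have := hT.eq_of_mem_cylinder h fun i hi => (hω i hi).symm
  omega

theorem IsStoppingRule.sigma_eq_of_mem_cylinder (hT : IsStoppingRule T) (hv : T v ≤ j)
    (hω : ω ∈ cylinder j v) :
    (⟨T ω, fun i => ω i⟩ : Σ n, Fin n → Y) = ⟨T v, fun i => v i⟩ := by
  have h := hT.eq_of_mem_cylinder hv hω
  exact Sigma.ext h ((Fin.heq_fun_iff h).2 fun i => hω i (i.2.trans_le (h ▸ hv)))

theorem IsStoppingRule.measurableSet_setOf_sigma [MeasurableSpace Y] [MeasurableSingletonClass Y]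
    [Countable Y] (hT : IsStoppingRule T) (g : (Σ n, Fin n → Y) → Prop) :
    MeasurableSet {ω | g ⟨T ω, fun i => ω i⟩} :=
  measurableSet_of_forall_agree T fun ω ω' h hω => by
    rwa [Set.mem_ofPred_eq,
      hT.sigma_eq_of_mem_cylinder (v := ω) le_rfl fun i hi => (h i hi).symm]

end StoppingRule

section Channel

variable {X Y W : Type*} [MeasurableSpace Y] {p : X → Y → ℝ}

/-- `ν` is the law of the outputs of the memoryless channel `p` driven by the feedback encoder
`e`, which maps the past outputs to the next input. -/
def IsChannelOutput (p : X → Y → ℝ) (e : (n : ℕ) → (Fin n → Y) → X) (ν : Measure (ℕ → Y)) :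
    Prop :=
  ∀ (n : ℕ) (v : ℕ → Y),
    ν (cylinder (n + 1) v) = ν (cylinder n v) * ENNReal.ofReal (p (e n fun i => v i) (v n))

theorem measure_cylinder_pos (hpos : ∀ x y, 0 < p x y) {e : (n : ℕ) → (Fin n → Y) → X}
    {ν : Measure (ℕ → Y)} [NeZero ν] (hν : IsChannelOutput p e ν) :
    ∀ (n : ℕ) (v : ℕ → Y), 0 < ν (cylinder n v)
  | 0, v => by simp [_root_.cylinder, NeZero.ne ν]
  | n + 1, v => by
    rw [hν]
    exact ENNReal.mul_pos (measure_cylinder_pos hpos hν n v).ne'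
      (ENNReal.ofReal_pos.2 (hpos _ _)).ne'

theorem measure_cylinder_extendSeq_snoc (hpos : ∀ x y, 0 < p x y)
    {e : (n : ℕ) → (Fin n → Y) → X} {ν : Measure (ℕ → Y)} (hν : IsChannelOutput p e ν)
    (y₀ : Y) {j : ℕ} (u : Fin j → Y) (y : Y) :
    (ν (cylinder (j + 1) (extendSeq y₀ (Fin.snoc u y)))).toReal =
      (ν (cylinder j (extendSeq y₀ u))).toReal * p (e j u) y := by
  rw [hν, extendSeq_snoc, cylinder_update, ENNReal.toReal_mul, ENNReal.toReal_ofReal (hpos _ _).le,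
    Function.update_self]
  congr 3
  funext i
  rw [Function.update_of_ne i.2.ne, extendSeq_apply_fin]

variable (μ : W → Measure (ℕ → Y))

-- `P(W ∈ H, Y^j = u)`, up to the factor `1 / |W|` of the uniform prior
def cylinderMass (y₀ : Y) (H : Finset W) (j : ℕ) (u : Fin j → Y) : ℝ :=
  ∑ w ∈ H, (μ w (cylinder j (extendSeq y₀ u))).toReal

variable {μ} [∀ w, IsFiniteMeasure (μ w)]

theorem cylinderMass_pos (hμ : ∀ w (n : ℕ) (v : ℕ → Y), 0 < μ w (cylinder n v)) (y₀ : Y)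
    {H : Finset W} (hH : H.Nonempty) (j : ℕ) (u : Fin j → Y) : 0 < cylinderMass μ y₀ H j u :=
  Finset.sum_pos (fun w _ => ENNReal.toReal_pos (hμ w _ _).ne' (measure_ne_top _ _)) hH

theorem sum_cylinderMass_snoc [MeasurableSingletonClass Y] [Fintype Y] (y₀ : Y) (H : Finset W)
    (j : ℕ) (u : Fin j → Y) :
    ∑ y, cylinderMass μ y₀ H (j + 1) (Fin.snoc u y) = cylinderMass μ y₀ H j u := by
  simp only [cylinderMass]
  rw [Finset.sum_comm]
  refine Finset.sum_congr rfl fun w _ => ?_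
  simpa using sum_measure_inter_cylinder_snoc (μ w) MeasurableSet.univ y₀ u

theorem sum_cylinderMass_mul_log_div_le [Fintype Y] (hpos : ∀ x y, 0 < p x y)
    (hsum : ∀ x, ∑ y, p x y = 1) {C : ℝ} (hC : ∀ x x', ∑ y, p x y * log (p x y / p x' y) ≤ C)
    {f : W → (n : ℕ) → (Fin n → Y) → X}
    (hchan : ∀ w, IsChannelOutput p (f w) (μ w))
    (hμ : ∀ w (n : ℕ) (v : ℕ → Y), 0 < μ w (cylinder n v)) (y₀ : Y) {H K : Finset W}
    (hH : H.Nonempty) (hK : K.Nonempty) (j : ℕ) (u : Fin j → Y) :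
    ∑ y, cylinderMass μ y₀ H (j + 1) (Fin.snoc u y) *
        log (cylinderMass μ y₀ H (j + 1) (Fin.snoc u y) /
          cylinderMass μ y₀ K (j + 1) (Fin.snoc u y)) ≤
      cylinderMass μ y₀ H j u * log (cylinderMass μ y₀ H j u / cylinderMass μ y₀ K j u) +
        C * cylinderMass μ y₀ H j u := by
  have hpos' : ∀ w, 0 < (μ w (cylinder j (extendSeq y₀ u))).toReal :=
    fun w => ENNReal.toReal_pos (hμ w _ _).ne' (measure_ne_top _ _)
  simpa only [cylinderMass, measure_cylinder_extendSeq_snoc hpos (hchan _)] using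
    sum_mixture_mul_log_div_le p hpos hsum hC hH hK
      (fun w _ => hpos' w) (fun w _ => hpos' w) (fun w => f w j u) (fun w => f w j u)

end Channel

section StoppedTest

variable {X Y W : Type*} [MeasurableSpace Y] [Fintype W] {μ : W → Measure (ℕ → Y)}
  {T : (ℕ → Y) → ℕ}

theorem sum_sum_measure_inter_cylinder_snoc [MeasurableSingletonClass Y] [Fintype Y]
    [∀ w, IsFiniteMeasure (μ w)] {S : W → Set (ℕ → Y)}
    (hS : ∀ w, MeasurableSet (S w)) (y₀ : Y) (j : ℕ) (u : Fin j → Y) :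
    ∑ y, ∑ w, (μ w (S w ∩ cylinder (j + 1) (extendSeq y₀ (Fin.snoc u y)))).toReal =
      ∑ w, (μ w (S w ∩ cylinder j (extendSeq y₀ u))).toReal := by
  rw [Finset.sum_comm]
  exact Finset.sum_congr rfl fun w _ => sum_measure_inter_cylinder_snoc (μ w) (hS w) y₀ u

variable [DecidableEq W]

theorem min_cylinderMass_le_sum_measure_error (hT : IsStoppingRule T) (y₀ : Y)
    (dec : (Σ n, Fin n → Y) → W) (H : Finset W) {j : ℕ} {u : Fin j → Y}
    (hstop : T (extendSeq y₀ u) ≤ j) :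
    min (cylinderMass μ y₀ H j u) (cylinderMass μ y₀ Hᶜ j u) ≤
      ∑ w, (μ w ({ω | (dec ⟨T ω, fun i => ω i⟩ ∈ H) ≠ (w ∈ H)} ∩
        cylinder j (extendSeq y₀ u))).toReal := by
  set ℓ : Σ n, Fin n → Y := ⟨T (extendSeq y₀ u), fun i => extendSeq y₀ u i⟩
  -- on the cylinder the test has already stopped, at the leaf `ℓ`
  have hcyl : ∀ w, (dec ℓ ∈ H) ≠ (w ∈ H) →
      {ω | (dec ⟨T ω, fun i => ω i⟩ ∈ H) ≠ (w ∈ H)} ∩ cylinder j (extendSeq y₀ u) =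
        cylinder j (extendSeq y₀ u) := fun w hw =>
    Set.inter_eq_self_of_subset_right fun ω hω => by
      rw [Set.mem_ofPred_eq, hT.sigma_eq_of_mem_cylinder hstop hω]
      exact hw
  have hle : ∀ K : Finset W, (∀ w ∈ K, (dec ℓ ∈ H) ≠ (w ∈ H)) →
      cylinderMass μ y₀ K j u ≤ ∑ w, (μ w ({ω | (dec ⟨T ω, fun i => ω i⟩ ∈ H) ≠ (w ∈ H)} ∩
        cylinder j (extendSeq y₀ u))).toReal := fun K hK =>
    (Finset.sum_congr rfl fun w hw => by rw [hcyl w (hK w hw)]).trans_le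
      (Finset.sum_le_sum_of_subset_of_nonneg K.subset_univ fun _ _ _ => ENNReal.toReal_nonneg)
  by_cases hd : dec ℓ ∈ H
  · exact (min_le_right _ _).trans
      (hle Hᶜ fun w hw => by simpa [hd] using Finset.mem_compl.1 hw)
  · exact (min_le_left _ _).trans (hle H fun w hw => by simpa [hd] using hw)

theorem leafSum_min_cylinderMass_le [MeasurableSingletonClass Y] [Fintype Y]
    [∀ w, IsFiniteMeasure (μ w)] (hT : IsStoppingRule T) (y₀ : Y)
    (dec : (Σ n, Fin n → Y) → W) (H : Finset W) (d m : ℕ) (u : Fin m → Y) :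
    leafSum (fun j u => T (extendSeq y₀ u) ≤ j)
        (fun j u => min (cylinderMass μ y₀ H j u) (cylinderMass μ y₀ Hᶜ j u)) d m u ≤
      ∑ w, (μ w ({ω | (dec ⟨T ω, fun i => ω i⟩ ∈ H) ≠ (w ∈ H)} ∩
          cylinder m (extendSeq y₀ u))).toReal +
        ∑ w, (μ w ({ω | m + d < T ω} ∩ cylinder m (extendSeq y₀ u))).toReal := by
  set E : W → Set (ℕ → Y) := fun w => {ω | (dec ⟨T ω, fun i => ω i⟩ ∈ H) ≠ (w ∈ H)}
  set R : Set (ℕ → Y) := {ω | m + d < T ω}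
  have hE : ∀ w, MeasurableSet (E w) := fun w =>
    hT.measurableSet_setOf_sigma fun ℓ => (dec ℓ ∈ H) ≠ (w ∈ H)
  have hR : MeasurableSet R := hT.measurableSet_setOf_sigma fun ℓ => m + d < ℓ.1
  calc _ ≤ leafSum (fun j u => T (extendSeq y₀ u) ≤ j)
        (fun j u => ∑ w, (μ w (E w ∩ cylinder j (extendSeq y₀ u))).toReal +
          ∑ w, (μ w (R ∩ cylinder j (extendSeq y₀ u))).toReal) d m u := by
        refine leafSum_le_leafSum (fun _ _ => True) (fun _ _ _ _ _ => trivial) d m u trivial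
          fun j u _ hleaf => ?_
        by_cases hstop : T (extendSeq y₀ u) ≤ j
        · exact (min_cylinderMass_le_sum_measure_error hT y₀ dec H hstop).trans
            (le_add_of_nonneg_right (Finset.sum_nonneg fun _ _ => ENNReal.toReal_nonneg))
        -- a leaf at the truncation depth that the test has not reached yet
        obtain rfl : j = m + d := hleaf.resolve_left hstop
        have hRcyl : R ∩ cylinder (m + d) (extendSeq y₀ u) = cylinder (m + d) (extendSeq y₀ u) :=
          Set.inter_eq_self_of_subset_right fun ω hω =>
            hT.lt_of_mem_cylinder (not_le.1 hstop) hω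
        simp only [hRcyl]
        refine le_add_of_nonneg_of_le (Finset.sum_nonneg fun _ _ => ENNReal.toReal_nonneg) ?_
        rw [← Finset.sum_add_sum_compl H]
        exact (min_le_left _ _).trans (le_add_of_nonneg_right
          (Finset.sum_nonneg fun _ _ => ENNReal.toReal_nonneg))
    _ = _ := by
        rw [leafSum_add, leafSum_eq_self (sum_sum_measure_inter_cylinder_snoc hE y₀),
          leafSum_eq_self (sum_sum_measure_inter_cylinder_snoc (fun _ => hR) y₀)]

theorem leafSum_depth_le_sum_setIntegral [MeasurableSingletonClass Y] [Fintype Y]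
    [∀ w, IsFiniteMeasure (μ w)] (hT : IsStoppingRule T)
    (hTint : ∀ w, Integrable (fun ω => (T ω : ℝ)) (μ w)) (y₀ : Y) (H : Finset W) (d : ℕ)
    {m : ℕ} {u : Fin m → Y} (hm : m ≤ T (extendSeq y₀ u)) :
    leafSum (fun j u => T (extendSeq y₀ u) ≤ j)
        (fun j u => j * (cylinderMass μ y₀ H j u + cylinderMass μ y₀ Hᶜ j u)) d m u ≤
      ∑ w, ∫ ω in cylinder m (extendSeq y₀ u), (T ω : ℝ) ∂μ w := by
  calc _ ≤ leafSum (fun j u => T (extendSeq y₀ u) ≤ j)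
        (fun j u => ∑ w, ∫ ω in cylinder j (extendSeq y₀ u), (T ω : ℝ) ∂μ w) d m u := by
        refine leafSum_le_leafSum (fun j u => j ≤ T (extendSeq y₀ u))
          (fun j u y _ hstop => hT.lt_of_mem_cylinder (not_le.1 hstop) fun i hi => ?_) d m u hm
          fun j u hj _ => ?_
        · rw [extendSeq_snoc, Function.update_of_ne hi.ne]
        rw [cylinderMass, cylinderMass, Finset.sum_add_sum_compl, Finset.mul_sum]
        refine Finset.sum_le_sum fun w _ => ?_
        calc (j : ℝ) * (μ w (cylinder j (extendSeq y₀ u))).toReal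
            = ∫ _ in cylinder j (extendSeq y₀ u), (j : ℝ) ∂μ w := by
              rw [setIntegral_const, measureReal_def, smul_eq_mul, mul_comm]
          _ ≤ _ := setIntegral_mono_on (integrableOn_const (measure_ne_top _ _))
              (hTint w).integrableOn (measurableSet_cylinder _ _)
              fun ω hω => Nat.cast_le.2 (hT.le_of_mem_cylinder hj hω)
    _ = _ := leafSum_eq_self (fun j u => by
        rw [Finset.sum_comm]
        exact Finset.sum_congr rfl fun w _ => sum_setIntegral_cylinder_snoc (μ w) (hTint w) y₀ u)
      d m u

/-- A lower bound on the error of the binary test `W ∈ H` against `W ∉ H` decided at time `T`,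
on a cylinder where the test has not stopped yet. -/
theorem mul_div_add_mul_exp_le_sum_measure_error [MeasurableSingletonClass Y] [Fintype Y]
    [∀ w, IsProbabilityMeasure (μ w)] {p : X → Y → ℝ} (hpos : ∀ x y, 0 < p x y)
    (hsum : ∀ x, ∑ y, p x y = 1) {C : ℝ} (hC0 : 0 ≤ C)
    (hC : ∀ x x', ∑ y, p x y * log (p x y / p x' y) ≤ C) {f : W → (n : ℕ) → (Fin n → Y) → X}
    (hchan : ∀ w, IsChannelOutput p (f w) (μ w))
    (hT : IsStoppingRule T) (hTint : ∀ w, Integrable (fun ω => (T ω : ℝ)) (μ w)) (y₀ : Y)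
    (dec : (Σ n, Fin n → Y) → W) {H : Finset W} (hH : H.Nonempty) (hHc : Hᶜ.Nonempty)
    {m : ℕ} {u : Fin m → Y} (hm : m ≤ T (extendSeq y₀ u)) :
    cylinderMass μ y₀ H m u * cylinderMass μ y₀ Hᶜ m u /
        (cylinderMass μ y₀ H m u + cylinderMass μ y₀ Hᶜ m u) *
        exp (-(C * ((∑ w, ∫ ω in cylinder m (extendSeq y₀ u), (T ω : ℝ) ∂μ w -
            m * (cylinderMass μ y₀ H m u + cylinderMass μ y₀ Hᶜ m u)) /
          (cylinderMass μ y₀ H m u + cylinderMass μ y₀ Hᶜ m u)))) ≤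
      ∑ w, (μ w ({ω | (dec ⟨T ω, fun i => ω i⟩ ∈ H) ≠ (w ∈ H)} ∩
        cylinder m (extendSeq y₀ u))).toReal := by
  have : Nonempty Y := ⟨y₀⟩
  have hμ : ∀ w (n : ℕ) (v : ℕ → Y), 0 < μ w (cylinder n v) :=
    fun w => measure_cylinder_pos hpos (hchan w)
  have hP0 := cylinderMass_pos hμ y₀ hH
  have hQ0 := cylinderMass_pos hμ y₀ hHc
  set a := cylinderMass μ y₀ H m u
  set b := cylinderMass μ y₀ Hᶜ m u
  set err := ∑ w, (μ w ({ω | (dec ⟨T ω, fun i => ω i⟩ ∈ H) ≠ (w ∈ H)} ∩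
    cylinder m (extendSeq y₀ u))).toReal
  set rest := fun n => ∑ w, (μ w {ω | n < T ω}).toReal
  have hab : 0 < a + b := add_pos (hP0 m u) (hQ0 m u)
  have hbound : ∀ d, a * b / (a + b) * exp (-(C * ((∑ w, ∫ ω in cylinder m (extendSeq y₀ u),
      (T ω : ℝ) ∂μ w - m * (a + b)) / (a + b)))) ≤ err + rest (m + d) := by
    intro d
    have hBH := mul_div_add_mul_exp_le_leafSum_min (halt := fun j u => T (extendSeq y₀ u) ≤ j)
      hP0 hQ0 (sum_cylinderMass_snoc y₀ H) (sum_cylinderMass_snoc y₀ Hᶜ)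
      (sum_cylinderMass_mul_log_div_le hpos hsum hC hchan hμ y₀ hH hHc)
      (sum_cylinderMass_mul_log_div_le hpos hsum hC hchan hμ y₀ hHc hH) d m u
    have hdepth := leafSum_depth_le_sum_setIntegral hT hTint y₀ H d hm
    have hrest : ∑ w, (μ w ({ω | m + d < T ω} ∩ cylinder m (extendSeq y₀ u))).toReal ≤
        rest (m + d) := Finset.sum_le_sum fun w _ =>
      ENNReal.toReal_mono (measure_ne_top _ _) (measure_mono Set.inter_subset_left)
    refine le_trans ?_ (hBH.trans ((leafSum_min_cylinderMass_le hT y₀ dec H d m u).trans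
      (add_le_add le_rfl hrest)))
    gcongr
    exact (div_pos (mul_pos (hP0 m u) (hQ0 m u)) hab).le
  have hrest : Filter.Tendsto rest Filter.atTop (nhds 0) := by
    simpa using tendsto_finsetSum _ fun w _ => (ENNReal.tendsto_toReal ENNReal.zero_ne_top).comp
      (tendsto_measure_setOf_lt_atTop (μ w) fun n => hT.measurableSet_setOf_sigma fun ℓ => n < ℓ.1)
  have hlim : Filter.Tendsto (fun d => err + rest (m + d)) Filter.atTop (nhds (err + 0)) :=
    tendsto_const_nhds.add (hrest.comp
      (Filter.tendsto_atTop_mono (fun d => Nat.le_add_left d m) Filter.tendsto_id))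
  simpa using ge_of_tendsto' hlim hbound

theorem div_four_mul_exp_le_sum_measure_error_div [MeasurableSingletonClass Y] [Fintype Y]
    [∀ w, IsProbabilityMeasure (μ w)] {p : X → Y → ℝ} (hpos : ∀ x y, 0 < p x y)
    (hsum : ∀ x, ∑ y, p x y = 1) {C : ℝ} (hC0 : 0 ≤ C)
    (hC : ∀ x x', ∑ y, p x y * log (p x y / p x' y) ≤ C) {f : W → (n : ℕ) → (Fin n → Y) → X}
    (hchan : ∀ w, IsChannelOutput p (f w) (μ w))
    (hT : IsStoppingRule T) (hTint : ∀ w, Integrable (fun ω => (T ω : ℝ)) (μ w)) (y₀ : Y)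
    (dec : (Σ n, Fin n → Y) → W) {H : Finset W} {m : ℕ} {u : Fin m → Y}
    (hm : m ≤ T (extendSeq y₀ u)) {c : ℝ} (hc : 0 < c)
    (hlo : c ≤ cylinderMass μ y₀ H m u / (cylinderMass μ y₀ H m u + cylinderMass μ y₀ Hᶜ m u))
    (hhi : cylinderMass μ y₀ H m u / (cylinderMass μ y₀ H m u + cylinderMass μ y₀ Hᶜ m u) ≤
      1 - c) :
    c / 4 * exp (-(C * ((∑ w, ∫ ω in cylinder m (extendSeq y₀ u), (T ω : ℝ) ∂μ w -
        m * (cylinderMass μ y₀ H m u + cylinderMass μ y₀ Hᶜ m u)) /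
          (cylinderMass μ y₀ H m u + cylinderMass μ y₀ Hᶜ m u)))) ≤
      (∑ w, (μ w ({ω | (dec ⟨T ω, fun i => ω i⟩ ∈ H) ≠ (w ∈ H)} ∩
        cylinder m (extendSeq y₀ u))).toReal) /
          (cylinderMass μ y₀ H m u + cylinderMass μ y₀ Hᶜ m u) := by
  set a := cylinderMass μ y₀ H m u
  set b := cylinderMass μ y₀ Hᶜ m u
  have hab : 0 < a + b := by
    refine (show 0 ≤ a + b from add_nonneg (Finset.sum_nonneg fun _ _ => ENNReal.toReal_nonneg)
      (Finset.sum_nonneg fun _ _ => ENNReal.toReal_nonneg)).lt_of_ne fun h => ?_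
    rw [← h, div_zero] at hlo
    linarith
  have ha : 0 < a := (div_pos_iff_of_pos_right hab).1 (hc.trans_le hlo)
  have hb : 0 < b := by linarith [(div_lt_one hab).1 (hhi.trans_lt (by linarith))]
  calc _ ≤ a * b / (a + b) / (a + b) * _ :=
        mul_le_mul_of_nonneg_right (div_four_le_mul_div_add_div_add hc hab hlo hhi) (exp_pos _).le
    _ = a * b / (a + b) * _ / (a + b) := div_mul_eq_mul_div _ _ _
    _ ≤ _ := div_le_div_of_nonneg_right (mul_div_add_mul_exp_le_sum_measure_error hpos hsum hC0
        hC hchan hT hTint y₀ dec (Finset.nonempty_of_sum_ne_zero ha.ne')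
        (Finset.nonempty_of_sum_ne_zero hb.ne') hm) hab.le

end StoppedTest

theorem stopCell_eq_cylinder {Y : Type*} {τ : (ℕ → Y) → ℕ} (hτ : IsStoppingRule τ)
    {s : Σ n, Fin n → Y} {ω₀ : ℕ → Y} (hω₀ : ω₀ ∈ stopCell τ s) (y₀ : Y) :
    τ (extendSeq y₀ s.2) = s.1 ∧ stopCell τ s = cylinder s.1 (extendSeq y₀ s.2) := by
  have hcyl : extendSeq y₀ s.2 ∈ cylinder s.1 ω₀ := fun i hi => by
    rw [show i = (⟨i, hi⟩ : Fin s.1) from rfl, extendSeq_apply_fin, hω₀.2]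
  have hτ₀ : τ (extendSeq y₀ s.2) = s.1 := (hτ.eq_of_mem_cylinder hω₀.1.le hcyl).trans hω₀.1
  refine ⟨hτ₀, Set.ext fun ω => ⟨fun h => mem_cylinder_extendSeq.2 h.2, fun h => ?_⟩⟩
  exact ⟨(hτ.eq_of_mem_cylinder hτ₀.le h).trans hτ₀, mem_cylinder_extendSeq.1 h⟩

theorem stmt18_general {X Y W : Type*} [Fintype X] [Fintype Y] [Fintype W]
    [MeasurableSpace Y] [MeasurableSingletonClass Y]
    (p : X → Y → ℝ) (hpos : ∀ x y, 0 < p x y) (hsum : ∀ x, ∑ y, p x y = 1)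
    (f : W → (n : ℕ) → (Fin n → Y) → X)
    (μ : W → Measure (ℕ → Y)) (hprob : ∀ w, IsProbabilityMeasure (μ w))
    (hchan : ∀ (w : W) (n : ℕ) (v : ℕ → Y),
      μ w (cylinder (n + 1) v) =
        μ w (cylinder n v) * ENNReal.ofReal (p (f w n fun i => v i) (v n)))
    (T τ : (ℕ → Y) → ℕ)
    (hstopT : ∀ (n : ℕ) (ω ω' : ℕ → Y), (∀ i < n, ω i = ω' i) → (T ω = n ↔ T ω' = n))
    (hstopτ : ∀ (n : ℕ) (ω ω' : ℕ → Y), (∀ i < n, ω i = ω' i) → (τ ω = n ↔ τ ω' = n))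
    (hle : ∀ ω, τ ω ≤ T ω)
    (hTint : ∀ w, Integrable (fun ω => (T ω : ℝ)) (μ w))
    (C1 lam δ : ℝ) (hC1 : 0 < C1)
    (hC1def : C1 = ⨆ x, ⨆ x', ∑ y, p x y * Real.log (p x y / p x' y))
    (hld : 0 < lam * δ)
    (G : (Σ n, Fin n → Y) → Finset W)
    (d : (Σ n, Fin n → Y) → W)
    (hpost : ∀ s : Σ n, Fin n → Y, 0 < ∑ w, (μ w (stopCell τ s)).toReal →
      lam * δ ≤ (∑ w ∈ G s, (μ w (stopCell τ s)).toReal) /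
          (∑ w, (μ w (stopCell τ s)).toReal) ∧
        (∑ w ∈ G s, (μ w (stopCell τ s)).toReal) / (∑ w, (μ w (stopCell τ s)).toReal)
          ≤ 1 - lam * δ) :
    ∀ s : Σ n, Fin n → Y, 0 < ∑ w, (μ w (stopCell τ s)).toReal →
      (∑ w, (μ w ({ω | (d ⟨T ω, fun i => ω i⟩ ∈ G s) ≠ (w ∈ G s)} ∩ stopCell τ s)).toReal) /
            (∑ w, (μ w (stopCell τ s)).toReal)
          ≤ (∑ w, (μ w ({ω | d ⟨T ω, fun i => ω i⟩ ≠ w} ∩ stopCell τ s)).toReal) /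
            (∑ w, (μ w (stopCell τ s)).toReal) ∧
        lam * δ / 4 * Real.exp (-(C1 *
              ((∑ w, ∫ ω in stopCell τ s, ((T ω : ℝ) - (τ ω : ℝ)) ∂μ w) /
                (∑ w, (μ w (stopCell τ s)).toReal))))
          ≤ (∑ w, (μ w ({ω | d ⟨T ω, fun i => ω i⟩ ≠ w} ∩ stopCell τ s)).toReal) /
            (∑ w, (μ w (stopCell τ s)).toReal) := by
  intro s hs
  classical
  have := hprob
  obtain ⟨ω₀, hω₀⟩ : (stopCell τ s).Nonempty :=
    Set.nonempty_iff_ne_empty.2 fun h => by simp [h] at hs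
  obtain ⟨hτ₀, hcell⟩ := stopCell_eq_cylinder hstopτ hω₀ (ω₀ 0)
  have hbin := div_le_div_of_nonneg_right (sum_measure_inter_mem_ne_le μ
    (fun ω => d ⟨T ω, fun i => ω i⟩) (G s) (stopCell τ s)) hs.le
  refine ⟨hbin, le_trans ?_ hbin⟩
  have hZ : ∑ w, (μ w (stopCell τ s)).toReal =
      cylinderMass μ (ω₀ 0) (G s) s.1 s.2 + cylinderMass μ (ω₀ 0) (G s)ᶜ s.1 s.2 := by
    rw [hcell, ← Finset.sum_add_sum_compl (G s)]; rfl
  obtain ⟨hlo, hhi⟩ := hpost s hs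
  rw [hZ, show ∑ w ∈ G s, (μ w (stopCell τ s)).toReal = cylinderMass μ (ω₀ 0) (G s) s.1 s.2 by
    rw [hcell]; rfl] at hlo hhi
  rw [hZ, Finset.sum_congr rfl fun w _ => setIntegral_sub_natCast_of_eqOn
      (hcell ▸ measurableSet_cylinder _ _) (hTint w) fun ω hω => hω.1,
    Finset.sum_sub_distrib, ← Finset.mul_sum, hZ, hcell]
  exact div_four_mul_exp_le_sum_measure_error_div hpos hsum hC1.le
    (fun x x' => hC1def ▸ le_ciSup_ciSup_of_finite
      (fun x x' => ∑ y, p x y * Real.log (p x y / p x' y)) x x') hchan hstopT hTint (ω₀ 0) d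
    (hτ₀.symm.le.trans (hle _)) hld hlo hhi

/-- Variable-length transmission of a uniformly distributed message over a DMC with feedback:
`μ w` is the output distribution given message `w`.  For any partition `{G(Y^τ), G(Y^τ)ᶜ}` of
the message set whose posterior probabilities given `Y^τ` lie in `[λδ, 1−λδ]`, and any
realization `y^τ` of positive probability: (i) the conditional error probability of the
induced binary test of `W ∈ G` versus `W ∉ G` (declare `W ∈ G` iff `Ŵ ∈ G`, decided at time
`T`) is at most the conditional probability that the decoder errs; and (ii) in particular
`Pr[Ŵ(Y^T) ≠ W | Y^τ] ≥ (λδ/4) exp(−C₁ E[T − τ | Y^τ])`. -/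
theorem stmt18 {X Y W : Type*} [Fintype X] [Fintype Y] [Fintype W]
    [Nonempty X] [Nonempty Y] [Nonempty W] [DecidableEq W]
    [MeasurableSpace Y] [MeasurableSingletonClass Y]
    (p : X → Y → ℝ) (hpos : ∀ x y, 0 < p x y) (hsum : ∀ x, ∑ y, p x y = 1)
    (f : W → (n : ℕ) → (Fin n → Y) → X)
    (μ : W → Measure (ℕ → Y)) (hprob : ∀ w, IsProbabilityMeasure (μ w))
    (hchan : ∀ (w : W) (n : ℕ) (v : ℕ → Y),
      μ w (cylinder (n + 1) v) =
        μ w (cylinder n v) * ENNReal.ofReal (p (f w n fun i => v i) (v n)))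
    (T τ : (ℕ → Y) → ℕ)
    (hstopT : ∀ (n : ℕ) (ω ω' : ℕ → Y), (∀ i < n, ω i = ω' i) → (T ω = n ↔ T ω' = n))
    (hstopτ : ∀ (n : ℕ) (ω ω' : ℕ → Y), (∀ i < n, ω i = ω' i) → (τ ω = n ↔ τ ω' = n))
    (hle : ∀ ω, τ ω ≤ T ω)
    (hTint : ∀ w, Integrable (fun ω => (T ω : ℝ)) (μ w))
    (C1 lam δ : ℝ) (hC1 : 0 < C1)
    (hC1def : C1 = ⨆ x, ⨆ x', ∑ y, p x y * Real.log (p x y / p x' y))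
    (hld : 0 < lam * δ) (hld1 : lam * δ ≤ 1)
    (G : (Σ n, Fin n → Y) → Finset W)
    (d : (Σ n, Fin n → Y) → W)
    (hpost : ∀ s : Σ n, Fin n → Y, 0 < ∑ w, (μ w (stopCell τ s)).toReal →
      lam * δ ≤ (∑ w ∈ G s, (μ w (stopCell τ s)).toReal) /
          (∑ w, (μ w (stopCell τ s)).toReal) ∧
        (∑ w ∈ G s, (μ w (stopCell τ s)).toReal) / (∑ w, (μ w (stopCell τ s)).toReal)
          ≤ 1 - lam * δ) :
    ∀ s : Σ n, Fin n → Y, 0 < ∑ w, (μ w (stopCell τ s)).toReal →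
      (∑ w, (μ w ({ω | (d ⟨T ω, fun i => ω i⟩ ∈ G s) ≠ (w ∈ G s)} ∩ stopCell τ s)).toReal) /
            (∑ w, (μ w (stopCell τ s)).toReal)
          ≤ (∑ w, (μ w ({ω | d ⟨T ω, fun i => ω i⟩ ≠ w} ∩ stopCell τ s)).toReal) /
            (∑ w, (μ w (stopCell τ s)).toReal) ∧
        lam * δ / 4 * Real.exp (-(C1 *
              ((∑ w, ∫ ω in stopCell τ s, ((T ω : ℝ) - (τ ω : ℝ)) ∂μ w) /
                (∑ w, (μ w (stopCell τ s)).toReal))))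
          ≤ (∑ w, (μ w ({ω | d ⟨T ω, fun i => ω i⟩ ≠ w} ∩ stopCell τ s)).toReal) /
            (∑ w, (μ w (stopCell τ s)).toReal) :=
  stmt18_general p hpos hsum f μ hprob hchan T τ hstopT hstopτ hle hTint C1 lam δ hC1 hC1def hld G d
    hpost
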